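/- For every measurable set E ⊂ ℝⁿ, the norm of the Gaussian barycenter satisfies |b(E)| ≤ (2π)^{-1/2}, with equality only possible when E is (up to null sets) a halfspace through the origin. -/

import Mathlib

open MeasureTheory Real Filter
open scoped RealInnerProductSpace

lemma int1d_gauss : ∫ t : ℝ, rexp (-t ^ 2 / 2) = Real.sqrt (2 * π) := by
  have := integral_gaussian (1/2 : ℝ)
  rw [show (π / (1/2:ℝ)) = 2 * π by ring] at this
  rw [← this]
  congr 1 with t
  ring_nf

lemma int1d_pos : ∫ t : ℝ, max t 0 * rexp (-t ^ 2 / 2) = 1 := by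
  have heq : (fun t : ℝ => max t 0 * rexp (-t ^ 2 / 2))
      = Set.indicator (Set.Ioi (0:ℝ)) (fun t => t * rexp (-t ^ 2 / 2)) := by
    funext t
    by_cases ht : 0 < t
    · rw [Set.indicator_of_mem (Set.mem_Ioi.2 ht), max_eq_left ht.le]
    · rw [Set.indicator_of_notMem (by simpa using ht), max_eq_right (not_lt.1 ht), zero_mul]
  rw [heq, integral_indicator measurableSet_Ioi]
  have hderiv : ∀ x ∈ Set.Ici (0:ℝ),
      HasDerivAt (fun t : ℝ => -rexp (-t ^ 2 / 2)) (x * rexp (-x ^ 2 / 2)) x := by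
    intro x _
    have h1 : HasDerivAt (fun t : ℝ => -t ^ 2 / 2) (-x) x := by
      have := ((hasDerivAt_pow 2 x).neg).div_const 2
      exact this.congr_deriv (by push_cast; ring)
    have := (h1.exp).neg
    exact this.congr_deriv (by ring)
  have htend : Tendsto (fun t : ℝ => -rexp (-t ^ 2 / 2)) atTop (nhds 0) := by
    rw [show (0:ℝ) = -0 by ring]
    apply Tendsto.neg
    apply Real.tendsto_exp_atBot.comp
    apply Tendsto.atBot_div_const (by norm_num)
    exact tendsto_neg_atBot_iff.2 (tendsto_pow_atTop (by norm_num))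
  have := integral_Ioi_of_hasDerivAt_of_nonneg' hderiv
    (fun x hx => mul_nonneg (le_of_lt hx) (Real.exp_nonneg _)) htend
  simpa using this

lemma key_integral {m : ℕ} (ω : EuclideanSpace ℝ (Fin (m + 1))) (hω : ‖ω‖ = 1) :
    ∫ x : EuclideanSpace ℝ (Fin (m + 1)), max ⟪ω, x⟫ 0 * rexp (-‖x‖ ^ 2 / 2)
      = Real.sqrt (2 * π) ^ m := by
  have hcard : Module.finrank ℝ (EuclideanSpace ℝ (Fin (m + 1)))
      = Fintype.card (Fin (m + 1)) := by simp
  have horth : Orthonormal ℝ (Set.restrict {(0 : Fin (m + 1))} (fun _ => ω)) := by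
    constructor
    · intro i; exact hω
    · intro i j hij
      exact absurd (Subsingleton.elim i j) hij
  obtain ⟨b, hb⟩ := horth.exists_orthonormalBasis_extension_of_card_eq hcard
  have hb0 : b 0 = ω := hb 0 rfl
  have h1 : ∫ x : EuclideanSpace ℝ (Fin (m + 1)), max ⟪ω, x⟫ 0 * rexp (-‖x‖ ^ 2 / 2)
      = ∫ y : EuclideanSpace ℝ (Fin (m + 1)), max (y 0) 0 * rexp (-‖y‖ ^ 2 / 2) := by
    rw [← (b.measurePreserving_repr_symm).integral_comp
      (b.repr.symm.toHomeomorph.measurableEmbedding)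
      (fun x => max ⟪ω, x⟫ 0 * rexp (-‖x‖ ^ 2 / 2))]
    congr 1 with y
    rw [← hb0, ← OrthonormalBasis.repr_apply_apply]
    simp
  have h2 : ∫ y : EuclideanSpace ℝ (Fin (m + 1)), max (y 0) 0 * rexp (-‖y‖ ^ 2 / 2)
      = ∫ z : Fin (m + 1) → ℝ, max (z 0) 0 * ∏ i, rexp (-(z i) ^ 2 / 2) := by
    rw [← (MeasurePreserving.symm _
      (EuclideanSpace.volume_preserving_symm_measurableEquiv_toLp (Fin (m + 1)))).integral_comp
      (MeasurableEquiv.measurableEmbedding _)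
      (fun y => max (y 0) 0 * rexp (-‖y‖ ^ 2 / 2))]
    congr 1 with z
    have hz : ∀ i, ((MeasurableEquiv.toLp 2 (Fin (m + 1) → ℝ)).symm.symm z) i = z i :=
      fun i => rfl
    have hnorm : ‖(MeasurableEquiv.toLp 2 (Fin (m + 1) → ℝ)).symm.symm z‖ ^ 2
        = ∑ i, (z i) ^ 2 := by
      rw [EuclideanSpace.norm_eq, sq_sqrt (by positivity)]
      simp [hz, sq_abs]
    rw [hz, hnorm, ← Real.exp_sum]
    congr 2
    rw [← Finset.sum_neg_distrib, ← Finset.sum_div]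
  have h3 : ∫ z : Fin (m + 1) → ℝ, max (z 0) 0 * ∏ i, rexp (-(z i) ^ 2 / 2)
      = Real.sqrt (2 * π) ^ m := by
    have hprod : ∀ z : Fin (m + 1) → ℝ, max (z 0) 0 * ∏ i, rexp (-(z i) ^ 2 / 2)
        = ∏ i, (fun i (t : ℝ) => (if i = 0 then max t 0 else 1) * rexp (-t ^ 2 / 2)) i (z i) := by
      intro z
      rw [Finset.prod_mul_distrib]
      simp [Finset.prod_ite_eq']
    simp_rw [hprod]
    rw [volume_pi, MeasureTheory.integral_fintype_prod_eq_prod (ι := Fin (m + 1))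
      (fun i (t : ℝ) => (if i = 0 then max t 0 else 1) * rexp (-t ^ 2 / 2))]
    rw [Fin.prod_univ_succ]
    simp only [if_pos rfl]
    calc (∫ t : ℝ, max t 0 * rexp (-t ^ 2 / 2)) *
          ∏ i : Fin m, ∫ t : ℝ, (if i.succ = 0 then max t 0 else 1) * rexp (-t ^ 2 / 2)
        = 1 * ∏ i : Fin m, ∫ t : ℝ, rexp (-t ^ 2 / 2) := by
          rw [int1d_pos]
          congr 1
          apply Finset.prod_congr rfl
          intro i _
          congr 1 with t
          rw [if_neg (Fin.succ_ne_zero i), one_mul]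
      _ = Real.sqrt (2 * π) ^ m := by
          rw [one_mul, Finset.prod_const, int1d_gauss]
          simp
  rw [h1, h2, h3]

lemma integrable_gauss_smul (n : ℕ) :
    Integrable (fun x : EuclideanSpace ℝ (Fin n) => rexp (-‖x‖ ^ 2 / 2) • x) := by
  have hg : Integrable (fun x : EuclideanSpace ℝ (Fin n) =>
      rexp (-(4⁻¹ : ℝ) * ‖x‖ ^ 2)) := by
    have hc := (GaussianFourier.integrable_cexp_neg_mul_sq_norm_add
      (V := EuclideanSpace ℝ (Fin n)) (b := (4⁻¹ : ℂ)) (by norm_num) 0 0).norm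
    refine hc.congr ?_
    filter_upwards with x
    simp [Complex.norm_exp]
    norm_cast
  refine hg.mono' ?_ ?_
  · exact (Continuous.smul ((Real.continuous_exp).comp (by fun_prop))
      continuous_id).aestronglyMeasurable
  · filter_upwards with x
    rw [norm_smul, Real.norm_eq_abs, abs_of_pos (Real.exp_pos _)]
    set t := ‖x‖ with ht
    have ht0 : 0 ≤ t := norm_nonneg x
    have h1 : t ≤ rexp (t ^ 2 / 4) := by
      have := Real.add_one_le_exp (t ^ 2 / 4)
      nlinarith [sq_nonneg (t / 2 - 1)]
    calc rexp (-t ^ 2 / 2) * t ≤ rexp (-t ^ 2 / 2) * rexp (t ^ 2 / 4) :=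
          mul_le_mul_of_nonneg_left h1 (Real.exp_nonneg _)
      _ = rexp (-(4⁻¹ : ℝ) * t ^ 2) := by rw [← Real.exp_add]; congr 1; ring

lemma const_identity (m : ℕ) :
    (2 * π) ^ (-((m : ℝ) + 1) / 2) * Real.sqrt (2 * π) ^ m
      = (Real.sqrt (2 * π))⁻¹ := by
  have h2π : (0:ℝ) < 2 * π := by positivity
  rw [Real.sqrt_eq_rpow, ← Real.rpow_natCast ((2 * π) ^ ((1:ℝ)/2)) m,
    ← Real.rpow_mul h2π.le, ← Real.rpow_add h2π, ← Real.rpow_neg h2π.le]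
  congr 1
  ring

/-- The (non-renormalized) Gaussian barycenter of a set `E ⊂ ℝⁿ`. -/
noncomputable def gaussBary {n : ℕ} (E : Set (EuclideanSpace ℝ (Fin n))) :
    EuclideanSpace ℝ (Fin n) :=
  (2 * Real.pi) ^ (-(n : ℝ) / 2) • ∫ x in E, Real.exp (-‖x‖ ^ 2 / 2) • x

theorem norm_gaussBary_le {n : ℕ} (E : Set (EuclideanSpace ℝ (Fin n)))
    (hE : MeasurableSet E) :
    ‖gaussBary E‖ ≤ (Real.sqrt (2 * Real.pi))⁻¹ ∧
    (‖gaussBary E‖ = (Real.sqrt (2 * Real.pi))⁻¹ →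
      ∃ ω : EuclideanSpace ℝ (Fin n), ‖ω‖ = 1 ∧
        E =ᵐ[volume] {x : EuclideanSpace ℝ (Fin n) | (inner ℝ x ω : ℝ) < 0}) := by
  have hsqrt_pos : (0:ℝ) < (Real.sqrt (2 * π))⁻¹ := by
    rw [inv_pos]
    exact Real.sqrt_pos.2 (by positivity)
  cases n with
  | zero =>
    have h0 : gaussBary E = 0 := by
      unfold gaussBary
      have : (fun x : EuclideanSpace ℝ (Fin 0) => rexp (-‖x‖ ^ 2 / 2) • x)
          = fun _ => (0 : EuclideanSpace ℝ (Fin 0)) := by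
        funext x
        rw [Subsingleton.elim x 0, smul_zero]
      rw [show (∫ x in E, rexp (-‖x‖ ^ 2 / 2) • x) = 0 by rw [this]; simp, smul_zero]
    rw [h0, norm_zero]
    exact ⟨hsqrt_pos.le, fun h => absurd h.symm (ne_of_gt hsqrt_pos)⟩
  | succ m =>
    have hf : Integrable (fun x : EuclideanSpace ℝ (Fin (m + 1)) =>
        rexp (-‖x‖ ^ 2 / 2) • x) := integrable_gauss_smul _
    set v : EuclideanSpace ℝ (Fin (m + 1)) := ∫ x in E, rexp (-‖x‖ ^ 2 / 2) • x with hv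
    have hc_pos : (0:ℝ) < (2 * π) ^ (-((m : ℝ) + 1) / 2) :=
      Real.rpow_pos_of_pos (by positivity) _
    have hBary : ‖gaussBary E‖ = (2 * π) ^ (-((m : ℝ) + 1) / 2) * ‖v‖ := by
      unfold gaussBary
      rw [norm_smul, Real.norm_eq_abs]
      congr 1
      · rw [abs_of_pos]
        · norm_num
        · exact Real.rpow_pos_of_pos (by positivity) _
    by_cases hv0 : v = 0
    · rw [hBary, hv0, norm_zero, mul_zero]
      exact ⟨hsqrt_pos.le, fun h => absurd h.symm (ne_of_gt hsqrt_pos)⟩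
    · obtain ⟨ω, hω, hinner_v⟩ :
          ∃ ω : EuclideanSpace ℝ (Fin (m + 1)), ‖ω‖ = 1 ∧ ⟪ω, v⟫ = ‖v‖ := by
        refine ⟨‖v‖⁻¹ • v, norm_smul_inv_norm hv0, ?_⟩
        rw [real_inner_smul_left, real_inner_self_eq_norm_sq]
        have hvne : ‖v‖ ≠ 0 := norm_ne_zero_iff.2 hv0
        field_simp
      have hh_int : Integrable
          (fun x : EuclideanSpace ℝ (Fin (m + 1)) => rexp (-‖x‖ ^ 2 / 2) * ⟪ω, x⟫) := by
        have := MeasureTheory.Integrable.const_inner (𝕜 := ℝ) ω hf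
        refine this.congr (Filter.Eventually.of_forall fun x => ?_)
        exact real_inner_smul_right ω x _
      have hhp_eq : ∀ x : EuclideanSpace ℝ (Fin (m + 1)),
          max ⟪ω, x⟫ 0 * rexp (-‖x‖ ^ 2 / 2)
            = max (rexp (-‖x‖ ^ 2 / 2) * ⟪ω, x⟫) 0 := by
        intro x
        rw [mul_comm, mul_max_of_nonneg _ _ (Real.exp_nonneg _), mul_zero]
      have hhp_int : Integrable (fun x : EuclideanSpace ℝ (Fin (m + 1)) =>
          max ⟪ω, x⟫ 0 * rexp (-‖x‖ ^ 2 / 2)) := by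
        simp_rw [hhp_eq]
        exact hh_int.pos_part
      have hIv : ⟪ω, v⟫ = ∫ x in E, rexp (-‖x‖ ^ 2 / 2) * ⟪ω, x⟫ := by
        rw [hv, ← integral_inner hf.integrableOn ω]
        apply integral_congr_ae
        filter_upwards with x
        exact real_inner_smul_right ω x _
      have hle1 : ∫ x in E, rexp (-‖x‖ ^ 2 / 2) * ⟪ω, x⟫
          ≤ ∫ x in E, max ⟪ω, x⟫ 0 * rexp (-‖x‖ ^ 2 / 2) := by
        apply integral_mono hh_int.integrableOn hhp_int.integrableOn
        intro x
        dsimp only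
        rw [hhp_eq]
        exact le_max_left _ _
      have hle2 : ∫ x in E, max ⟪ω, x⟫ 0 * rexp (-‖x‖ ^ 2 / 2)
          ≤ ∫ x : EuclideanSpace ℝ (Fin (m + 1)), max ⟪ω, x⟫ 0 * rexp (-‖x‖ ^ 2 / 2) :=
        setIntegral_le_integral hhp_int
          (Filter.Eventually.of_forall fun x => by positivity)
      have hkey := key_integral ω hω
      have hnormv : ‖v‖ ≤ Real.sqrt (2 * π) ^ m := by
        rw [← hinner_v, hIv]
        calc ∫ x in E, rexp (-‖x‖ ^ 2 / 2) * ⟪ω, x⟫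
            ≤ ∫ x : EuclideanSpace ℝ (Fin (m + 1)), max ⟪ω, x⟫ 0 * rexp (-‖x‖ ^ 2 / 2) :=
              le_trans hle1 hle2
          _ = Real.sqrt (2 * π) ^ m := hkey
      constructor
      · rw [hBary, ← const_identity m]
        exact mul_le_mul_of_nonneg_left hnormv hc_pos.le
      · intro heq
        have h1 : ‖v‖ = Real.sqrt (2 * π) ^ m := by
          rw [hBary, ← const_identity m] at heq
          exact mul_left_cancel₀ (ne_of_gt hc_pos) heq
        have hEh : ∫ x in E, rexp (-‖x‖ ^ 2 / 2) * ⟪ω, x⟫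
            = ∫ x : EuclideanSpace ℝ (Fin (m + 1)), max ⟪ω, x⟫ 0 * rexp (-‖x‖ ^ 2 / 2) := by
          rw [← hIv, hinner_v, h1, hkey]
        have hsplit := integral_add_compl hE hhp_int
        have hsub : ∫ x in E, (max ⟪ω, x⟫ 0 * rexp (-‖x‖ ^ 2 / 2)
              - rexp (-‖x‖ ^ 2 / 2) * ⟪ω, x⟫)
            = (∫ x in E, max ⟪ω, x⟫ 0 * rexp (-‖x‖ ^ 2 / 2))
              - ∫ x in E, rexp (-‖x‖ ^ 2 / 2) * ⟪ω, x⟫ :=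
          integral_sub hhp_int.integrableOn hh_int.integrableOn
        have hA_nonneg : (0:ℝ) ≤ ∫ x in E, (max ⟪ω, x⟫ 0 * rexp (-‖x‖ ^ 2 / 2)
              - rexp (-‖x‖ ^ 2 / 2) * ⟪ω, x⟫) := by
          apply setIntegral_nonneg hE
          intro x _
          rw [hhp_eq]
          simp [le_max_left]
        have hB_nonneg : (0:ℝ) ≤ ∫ x in Eᶜ, max ⟪ω, x⟫ 0 * rexp (-‖x‖ ^ 2 / 2) := by
          apply setIntegral_nonneg hE.compl
          intro x _
          positivity
        have hA0 : ∫ x in E, (max ⟪ω, x⟫ 0 * rexp (-‖x‖ ^ 2 / 2)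
              - rexp (-‖x‖ ^ 2 / 2) * ⟪ω, x⟫) = 0 := by
          rw [hsub]
          linarith [hsplit, hEh, hB_nonneg, hA_nonneg]
        have hB0 : ∫ x in Eᶜ, max ⟪ω, x⟫ 0 * rexp (-‖x‖ ^ 2 / 2) = 0 := by
          rw [hsub] at hA0
          linarith [hsplit, hEh]
        have hAae : ∀ᵐ x : EuclideanSpace ℝ (Fin (m + 1)),
            x ∈ E → max ⟪ω, x⟫ 0 * rexp (-‖x‖ ^ 2 / 2)
              - rexp (-‖x‖ ^ 2 / 2) * ⟪ω, x⟫ = 0 := by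
          have hint : IntegrableOn (fun x : EuclideanSpace ℝ (Fin (m + 1)) =>
              max ⟪ω, x⟫ 0 * rexp (-‖x‖ ^ 2 / 2)
                - rexp (-‖x‖ ^ 2 / 2) * ⟪ω, x⟫) E volume := by
            exact (hhp_int.sub hh_int).integrableOn
          have := (setIntegral_eq_zero_iff_of_nonneg_ae
            (Filter.Eventually.of_forall fun x => by
              simp only [Pi.zero_apply]
              rw [hhp_eq]
              simp [le_max_left]) hint).1 hA0
          exact (ae_restrict_iff' hE).1 this
        have hBae : ∀ᵐ x : EuclideanSpace ℝ (Fin (m + 1)),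
            x ∈ Eᶜ → max ⟪ω, x⟫ 0 * rexp (-‖x‖ ^ 2 / 2) = 0 := by
          have := (setIntegral_eq_zero_iff_of_nonneg_ae
            (Filter.Eventually.of_forall fun x => by positivity)
            hhp_int.integrableOn).1 hB0
          exact (ae_restrict_iff' hE.compl).1 this
        have hker : volume {x : EuclideanSpace ℝ (Fin (m + 1)) | ⟪ω, x⟫ = 0} = 0 := by
          have hset : {x : EuclideanSpace ℝ (Fin (m + 1)) | ⟪ω, x⟫ = 0}
              = ((Submodule.span ℝ {ω})ᗮ : Set (EuclideanSpace ℝ (Fin (m + 1)))) := by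
            ext x
            simp only [Set.mem_setOf_eq, SetLike.mem_coe,
              Submodule.mem_orthogonal_singleton_iff_inner_right]
          rw [hset]
          apply Measure.addHaar_submodule
          intro htop
          have hmem : ω ∈ (Submodule.span ℝ {ω})ᗮ := htop ▸ Submodule.mem_top
          have h0 : ⟪ω, ω⟫ = 0 :=
            Submodule.mem_orthogonal_singleton_iff_inner_right.1 hmem
          rw [real_inner_self_eq_norm_sq, hω] at h0
          norm_num at h0
        have hne : ∀ᵐ x : EuclideanSpace ℝ (Fin (m + 1)), ⟪ω, x⟫ ≠ 0 := by
          rw [ae_iff]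
          convert hker using 2
          simp [not_not]
        refine ⟨-ω, by simpa using hω, ?_⟩
        rw [Filter.eventuallyEq_set]
        filter_upwards [hAae, hBae, hne] with x hxA hxB hxne
        have hflip : (inner ℝ x (-ω) : ℝ) = -⟪ω, x⟫ := by
          rw [inner_neg_right, real_inner_comm]
        simp only [Set.mem_setOf_eq, hflip, neg_lt, neg_zero]
        constructor
        · intro hxE
          have h2 := hxA hxE
          rw [hhp_eq] at h2
          have h3 : 0 ≤ rexp (-‖x‖ ^ 2 / 2) * ⟪ω, x⟫ := by
            rw [← sub_eq_zero.1 h2]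
            exact le_max_right _ _
          have h4 : 0 ≤ ⟪ω, x⟫ :=
            nonneg_of_mul_nonneg_right h3 (Real.exp_pos _)
          exact lt_of_le_of_ne h4 (Ne.symm hxne)
        · intro hlt
          by_contra hxE
          have h2 := hxB hxE
          have h3 : max ⟪ω, x⟫ 0 = 0 := by
            have := Real.exp_pos (-‖x‖ ^ 2 / 2)
            rcases mul_eq_zero.1 h2 with h | h
            · exact h
            · linarith
          have hle : ⟪ω, x⟫ ≤ 0 := by
            rw [← h3]
            exact le_max_left _ _
          linarith
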